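/- If m ≥ 4 is even, then γ(Φ(X1X2⋯Xm)) = 0 in Sym^m(H) for all X1, …, Xm ∈ H; consequently α(Φ(X1X2⋯Xm)) = 0, where α := −β + γ. -/
import Mathlib

set_option linter.unusedSectionVars false


noncomputable section

variable {H : Type*} [AddCommGroup H] [Module ℚ H]

/-- The pure tensor `X1 ⊗ ⋯ ⊗ Xm`, as the element `ι(X1)⋯ι(Xm)` of the
tensor algebra `T(H)`. -/
def word (l : List H) : TensorAlgebra ℚ H :=
  (l.map fun x => TensorAlgebra.ι ℚ x).prod

/-- The Dynkin map `Φ(X1 X2 ⋯ Xm) = [X1,[X2,[⋯,[X_{m−1},Xm]⋯]]]`, with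
`[a,b] := ab − ba` the commutator in `T(H)` and `Φ(X1) = X1`. -/
def dynkin : List H → TensorAlgebra ℚ H
  | [] => 0
  | [x] => TensorAlgebra.ι ℚ x
  | x :: y :: l =>
      TensorAlgebra.ι ℚ x * dynkin (y :: l) - dynkin (y :: l) * TensorAlgebra.ι ℚ x

variable {A : Type*} [CommRing A] [Algebra ℚ A]

/-- The monomial `X1 X2 ⋯ Xm` in the symmetric algebra `Sym(H)`, modelled by a
commutative `ℚ`-algebra `A` equipped with a linear map `σ : H → A`. -/
def symword (σ : H →ₗ[ℚ] A) (l : List H) : A := (l.map fun x => σ x).prod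

/-- `β = β_{Y,Z} : H^{⊗m} → Sym^m(H)` (for every `m ≥ 2` simultaneously) is the
linear map determined on pure tensors by
`β(X1⋯Xm) = −(Y·X1)·Z X2⋯Xm − (Y·Xm)·Z X1⋯X_{m−1} + (Z·X1)·Y X2⋯Xm + (Z·Xm)·Y X1⋯X_{m−1}`. -/
def IsBeta (ω : H →ₗ[ℚ] H →ₗ[ℚ] ℚ) (σ : H →ₗ[ℚ] A) (Y Z : H)
    (β : TensorAlgebra ℚ H →ₗ[ℚ] A) : Prop :=
  ∀ (x z : H) (mid : List H),
    β (word (x :: (mid ++ [z]))) =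
      -((ω Y x) • (σ Z * symword σ (mid ++ [z])))
        - (ω Y z) • (σ Z * symword σ (x :: mid))
        + (ω Z x) • (σ Y * symword σ (mid ++ [z]))
        + (ω Z z) • (σ Y * symword σ (x :: mid))

/-- `γ = γ_{Y,Z} : H^{⊗m} → Sym^m(H)` (for every `m ≥ 3` simultaneously) is the
linear map determined on pure tensors by
`γ(X1⋯Xm) = −(Y·X2)·Z X1X3⋯Xm − (Y·X_{m−1})·Z X1⋯X_{m−2}Xm + (Z·X2)·Y X1X3⋯Xm + (Z·X_{m−1})·Y X1⋯X_{m−2}Xm`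
(for `m = 3` the positions `2` and `m−1` coincide, so the corresponding terms add up). -/
def IsGamma (ω : H →ₗ[ℚ] H →ₗ[ℚ] ℚ) (σ : H →ₗ[ℚ] A) (Y Z : H)
    (γ : TensorAlgebra ℚ H →ₗ[ℚ] A) : Prop :=
  (∀ a b c : H,
    γ (word [a, b, c]) =
      -((ω Y b) • (σ Z * symword σ [a, c]))
        - (ω Y b) • (σ Z * symword σ [a, c])
        + (ω Z b) • (σ Y * symword σ [a, c])
        + (ω Z b) • (σ Y * symword σ [a, c])) ∧
  (∀ (a b : H) (mid : List H) (c d : H),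
    γ (word (a :: b :: (mid ++ [c, d]))) =
      -((ω Y b) • (σ Z * symword σ (a :: (mid ++ [c, d]))))
        - (ω Y c) • (σ Z * symword σ (a :: b :: (mid ++ [d])))
        + (ω Z b) • (σ Y * symword σ (a :: (mid ++ [c, d])))
        + (ω Z c) • (σ Y * symword σ (a :: b :: (mid ++ [d]))))

/- Auxiliary development -/

section Aux

/-- The signed expansion of the Dynkin element: a list of (sign, word). -/
def dexp : List H → List (Bool × List H)
  | [] => []
  | [x] => [(false, [x])]
  | x :: y :: t =>
      ((dexp (y :: t)).map fun p => (p.1, x :: p.2)) ++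
      ((dexp (y :: t)).map fun p => (!p.1, p.2 ++ [x]))

/-- Signed sum over the expansion. -/
def ssum {M : Type*} [AddCommGroup M] (f : List H → M) (l : List H) : M :=
  ((dexp l).map fun p => if p.1 then -f p.2 else f p.2).sum

lemma listsum_map_neg {α : Type*} {M : Type*} [AddCommGroup M] (L : List α) (f : α → M) :
    (L.map fun a => -f a).sum = -(L.map f).sum := by
  induction L with
  | nil => simp
  | cons a t ih =>
    rw [List.map_cons, List.map_cons, List.sum_cons, List.sum_cons, ih, neg_add]

lemma listsum_map_mul_left {α : Type*} {R : Type*} [Ring R] (c : R) (L : List α) (g : α → R) :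
    (L.map fun a => c * g a).sum = c * (L.map g).sum := by
  induction L with
  | nil => simp
  | cons a t ih => simp [ih, mul_add]

lemma listsum_map_mul_right {α : Type*} {R : Type*} [Ring R] (c : R) (L : List α) (g : α → R) :
    (L.map fun a => g a * c).sum = (L.map g).sum * c := by
  induction L with
  | nil => simp
  | cons a t ih => simp [ih, add_mul]

lemma ssum_cons {M : Type*} [AddCommGroup M] (f : List H → M) (x y : H) (t : List H) :
    ssum f (x :: y :: t) =
      ssum (fun w => f (x :: w)) (y :: t) - ssum (fun w => f (w ++ [x])) (y :: t) := by
  have h1 : ((dexp (y :: t)).map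
        ((fun p : Bool × List H => if p.1 = true then -f p.2 else f p.2) ∘ fun p => (p.1, x :: p.2)))
      = ((dexp (y :: t)).map fun p =>
          if p.1 = true then -(fun w => f (x :: w)) p.2 else (fun w => f (x :: w)) p.2) := by
    apply List.map_congr_left
    rintro ⟨s, w⟩ _
    cases s <;> simp [Function.comp]
  have h2 : ((dexp (y :: t)).map
        ((fun p : Bool × List H => if p.1 = true then -f p.2 else f p.2) ∘ fun p => (!p.1, p.2 ++ [x])))
      = ((dexp (y :: t)).map fun p =>
          -(if p.1 = true then -(fun w => f (w ++ [x])) p.2 else (fun w => f (w ++ [x])) p.2)) := by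
    apply List.map_congr_left
    rintro ⟨s, w⟩ _
    cases s <;> simp [Function.comp]
  unfold ssum
  show ((((dexp (y :: t)).map fun p => (p.1, x :: p.2)) ++
      ((dexp (y :: t)).map fun p => (!p.1, p.2 ++ [x]))).map _).sum = _
  rw [List.map_append, List.sum_append, List.map_map, List.map_map, h1, h2,
    listsum_map_neg, sub_eq_add_neg]

lemma ssum_mul_left (c : TensorAlgebra ℚ H) (f : List H → TensorAlgebra ℚ H) (l : List H) :
    ssum (fun w => c * f w) l = c * ssum f l := by
  unfold ssum
  rw [← listsum_map_mul_left]
  apply congrArg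
  apply List.map_congr_left
  rintro ⟨s, w⟩ _
  cases s <;> simp

lemma ssum_mul_right (c : TensorAlgebra ℚ H) (f : List H → TensorAlgebra ℚ H) (l : List H) :
    ssum (fun w => f w * c) l = ssum f l * c := by
  unfold ssum
  rw [← listsum_map_mul_right]
  apply congrArg
  apply List.map_congr_left
  rintro ⟨s, w⟩ _
  cases s <;> simp

lemma word_cons (x : H) (w : List H) : word (x :: w) = TensorAlgebra.ι ℚ x * word w := by
  simp [word]

lemma word_concat (x : H) (w : List H) : word (w ++ [x]) = word w * TensorAlgebra.ι ℚ x := by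
  simp [word, List.prod_append]

lemma dynkin_eq : ∀ l : List H, dynkin l = ssum word l
  | [] => by simp [dynkin, ssum, dexp]
  | [x] => by simp [dynkin, ssum, dexp, word]
  | x :: y :: t => by
    rw [dynkin, dynkin_eq (y :: t), ssum_cons]
    have c1 : (fun w => word (x :: w)) = (fun w : List H => TensorAlgebra.ι ℚ x * word w) :=
      funext fun w => word_cons x w
    have c2 : (fun w => word (w ++ [x])) = (fun w : List H => word w * TensorAlgebra.ι ℚ x) :=
      funext fun w => word_concat x w
    rw [c1, c2, ssum_mul_left, ssum_mul_right]

lemma ssum_apply {M N : Type*} [AddCommGroup M] [Module ℚ M] [AddCommGroup N] [Module ℚ N]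
    (φ : M →ₗ[ℚ] N) (f : List H → M) (l : List H) :
    φ (ssum f l) = ssum (fun w => φ (f w)) l := by
  unfold ssum
  rw [map_list_sum, List.map_map]
  apply congrArg
  apply List.map_congr_left
  rintro ⟨s, w⟩ _
  cases s <;> simp

lemma ssum_congr {M : Type*} [AddCommGroup M] {f g : List H → M} {l : List H}
    (h : ∀ p ∈ dexp l, f p.2 = g p.2) : ssum f l = ssum g l := by
  unfold ssum
  apply congrArg
  apply List.map_congr_left
  rintro ⟨s, w⟩ hp
  rw [h _ hp]

lemma dexp_perm : ∀ (l : List H), ∀ p ∈ dexp l, p.2.Perm l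
  | [], p, hp => by simp [dexp] at hp
  | [x], p, hp => by
    simp [dexp] at hp
    simp [hp]
  | x :: y :: t, p, hp => by
    rw [show dexp (x :: y :: t) = ((dexp (y :: t)).map fun p => (p.1, x :: p.2)) ++
      ((dexp (y :: t)).map fun p => (!p.1, p.2 ++ [x])) from rfl, List.mem_append] at hp
    rcases hp with hp | hp <;> rw [List.mem_map] at hp <;> obtain ⟨q, hq, rfl⟩ := hp
    · exact (dexp_perm (y :: t) q hq).cons x
    · exact (List.perm_append_singleton x q.2).trans ((dexp_perm (y :: t) q hq).cons x)

lemma ssum_rev {M : Type*} [AddCommGroup M] :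
    ∀ (l : List H) (f : List H → M),
      ssum (fun w => f w.reverse) l = if Even l.length then -ssum f l else ssum f l
  | [], f => by simp [ssum, dexp]
  | [x], f => by simp [ssum, dexp]
  | x :: y :: t, f => by
    have ih₁ := ssum_rev (y :: t) (fun w => f (w ++ [x]))
    have ih₂ := ssum_rev (y :: t) (fun w => f (x :: w))
    rw [ssum_cons, ssum_cons]
    have e1 : (fun w => f ((x :: w).reverse)) = (fun w : List H => f (w.reverse ++ [x])) := by
      funext w; rw [List.reverse_cons]
    have e2 : (fun w => f ((w ++ [x]).reverse)) = (fun w : List H => f (x :: w.reverse)) := by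
      funext w; simp
    rw [e1, e2]
    rw [show (fun w : List H => f (w.reverse ++ [x])) = (fun w : List H => (fun v => f (v ++ [x])) w.reverse) from rfl]
    rw [show (fun w : List H => f (x :: w.reverse)) = (fun w : List H => (fun v => f (x :: v)) w.reverse) from rfl]
    rw [ih₁, ih₂]
    have hpar : Even (x :: y :: t).length ↔ ¬ Even (y :: t).length := by
      rw [List.length_cons]; exact Nat.even_add_one
    by_cases h : Even (y :: t).length
    · rw [if_pos h, if_pos h, if_neg (by rw [hpar]; exact not_not_intro h)]
      abel
    · rw [if_neg h, if_neg h, if_pos (hpar.mpr h)]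
      abel

end Aux

section Aux2

variable {A : Type*} [CommRing A] [Algebra ℚ A]

lemma symword_cons (σ : H →ₗ[ℚ] A) (x : H) (l : List H) :
    symword σ (x :: l) = σ x * symword σ l := by simp [symword]

lemma symword_append (σ : H →ₗ[ℚ] A) (l₁ l₂ : List H) :
    symword σ (l₁ ++ l₂) = symword σ l₁ * symword σ l₂ := by
  simp [symword, List.prod_append]

lemma symword_reverse (σ : H →ₗ[ℚ] A) (l : List H) :
    symword σ l.reverse = symword σ l := by
  simp [symword, List.prod_reverse]

lemma symword_nil (σ : H →ₗ[ℚ] A) : symword σ ([] : List H) = 1 := by simp [symword]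

lemma eq_zero_of_eq_neg {M : Type*} [AddCommGroup M] [Module ℚ M] {a : M} (h : a = -a) :
    a = 0 := by
  have h2 : (2 : ℚ) • a = 0 := by
    rw [two_smul]
    nth_rewrite 1 [h]
    simp
  rcases smul_eq_zero.mp h2 with h' | h'
  · norm_num at h'
  · exact h'

lemma concat_split {w : List H} (hw : 1 ≤ w.length) : ∃ (m : List H) (z : H), w = m ++ [z] := by
  rcases List.eq_nil_or_concat w with rfl | ⟨m, z, h⟩
  · simp at hw
  · exact ⟨m, z, by simpa [List.concat_eq_append] using h⟩

lemma beta_word_rev (ω : H →ₗ[ℚ] H →ₗ[ℚ] ℚ) (σ : H →ₗ[ℚ] A) (Y Z : H)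
    (β : TensorAlgebra ℚ H →ₗ[ℚ] A) (hβ : IsBeta ω σ Y Z β)
    (w : List H) (hw : 2 ≤ w.length) :
    β (word w.reverse) = β (word w) := by
  obtain ⟨x, rest, rfl⟩ : ∃ (x : H) (rest : List H), w = x :: rest := by
    cases w with
    | nil => simp at hw
    | cons a t => exact ⟨a, t, rfl⟩
  obtain ⟨mid, z, rfl⟩ : ∃ (m : List H) (z : H), rest = m ++ [z] := by
    apply concat_split
    simpa using hw
  have hrev : (x :: (mid ++ [z])).reverse = z :: (mid.reverse ++ [x]) := by
    simp
  rw [hrev, hβ z x mid.reverse, hβ x z mid]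
  rw [symword_append, symword_append, symword_cons, symword_cons, symword_reverse,
    symword_cons, symword_cons, symword_nil]
  simp only [Algebra.smul_def]
  ring

lemma gamma_word_rev (ω : H →ₗ[ℚ] H →ₗ[ℚ] ℚ) (σ : H →ₗ[ℚ] A) (Y Z : H)
    (γ : TensorAlgebra ℚ H →ₗ[ℚ] A) (hγ : IsGamma ω σ Y Z γ)
    (w : List H) (hw : 4 ≤ w.length) :
    γ (word w.reverse) = γ (word w) := by
  obtain ⟨a, b, rest, rfl⟩ : ∃ (a b : H) (rest : List H), w = a :: b :: rest := by
    cases w with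
    | nil => simp at hw
    | cons a t =>
      cases t with
      | nil => simp at hw
      | cons b r => exact ⟨a, b, r, rfl⟩
  obtain ⟨m', d, rfl⟩ : ∃ (m : List H) (z : H), rest = m ++ [z] := by
    apply concat_split
    simp at hw
    omega
  obtain ⟨mid, c, rfl⟩ : ∃ (m : List H) (z : H), m' = m ++ [z] := by
    apply concat_split
    simp at hw
    omega
  have hre : mid ++ [c] ++ [d] = mid ++ [c, d] := by simp
  rw [hre]
  have hrev : (a :: b :: (mid ++ [c, d])).reverse = d :: c :: (mid.reverse ++ [b, a]) := by
    simp
  rw [hrev, hγ.2 d c mid.reverse b a, hγ.2 a b mid c d]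
  rw [show ([b, a] : List H) = [b] ++ [a] from rfl, show ([c, d] : List H) = [c] ++ [d] from rfl]
  simp only [symword_cons, symword_append, symword_reverse, symword_nil]
  simp only [Algebra.smul_def]
  ring

end Aux2

/-- Lemma (Kawazumi–Kuno, Lemma on γ, part (2)): if `m ≥ 4` is even, then
`γ(Φ(X1 X2 ⋯ Xm)) = 0` in `Sym^m(H)`; consequently `α(Φ(X1X2⋯Xm)) = 0`, where
`α := −β + γ`. -/
theorem stmt8 (ω : H →ₗ[ℚ] H →ₗ[ℚ] ℚ) (hω : ∀ x, ω x x = 0)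
    (σ : H →ₗ[ℚ] A) (Y Z : H)
    (β : TensorAlgebra ℚ H →ₗ[ℚ] A) (hβ : IsBeta ω σ Y Z β)
    (γ : TensorAlgebra ℚ H →ₗ[ℚ] A) (hγ : IsGamma ω σ Y Z γ)
    (l : List H) (hl : 4 ≤ l.length) (he : Even l.length) :
    γ (dynkin l) = 0 ∧ -β (dynkin l) + γ (dynkin l) = 0 := by
  have key : ∀ (φ : TensorAlgebra ℚ H →ₗ[ℚ] A),
      (∀ p ∈ dexp l, φ (word p.2.reverse) = φ (word p.2)) → φ (dynkin l) = 0 := by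
    intro φ hφ
    have h1 : φ (dynkin l) = ssum (fun w => φ (word w)) l := by
      rw [dynkin_eq]; exact ssum_apply φ word l
    have h3 := ssum_rev l (fun w => φ (word w))
    rw [if_pos he] at h3
    have h2 : ssum (fun w => φ (word w.reverse)) l = ssum (fun w => φ (word w)) l :=
      ssum_congr hφ
    rw [h2] at h3
    rw [h1]
    exact eq_zero_of_eq_neg h3
  have hγ0 : γ (dynkin l) = 0 := by
    apply key γ
    intro p hp
    apply gamma_word_rev ω σ Y Z γ hγ
    rw [(dexp_perm l p hp).length_eq]; exact hl
  have hβ0 : β (dynkin l) = 0 := by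
    apply key β
    intro p hp
    apply beta_word_rev ω σ Y Z β hβ
    rw [(dexp_perm l p hp).length_eq]; omega
  exact ⟨hγ0, by rw [hγ0, hβ0]; simp⟩


end
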